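/- For every feasible point z̄ ∈ 𝒰 of the generalized Ramsey model with default there exists a vector z ∈ ℝ^{2H(T+1)} such that ∇g_j(z̄)ᵀ(z − z̄) < 0 for all indices j in the active set I(z̄) := {j ∈ {1,…,T+1} : Σ_{h=1}^H ā_j^h = 0}. -/
import Mathlib


/-- Feasibility for the generalized Ramsey model with default. -/
def Feasible (H T : ℕ) (r ω : ℕ → ℝ) (l : Fin H → ℝ) (τ δ : ℝ)
    (a0 : Fin H → ℝ) (c a : Fin H → ℕ → ℝ) : Prop :=
  (∀ h, a h 0 = a0 h) ∧
  (∀ h : Fin H, ∀ t ≤ T, 0 < c h t) ∧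
  (∀ h : Fin H, ∀ t ≤ T,
    a h (t + 1) = τ * ω t * l h + (τ * (1 + r t) - δ) * a h t - τ * c h t) ∧
  (∀ t ≤ T, 0 ≤ ∑ h, a h (t + 1))

/-- Coordinates of `ℝ^{2H(T+1)}`: `Sum.inl (h, t)` is the consumption variable
`c_t^h` (`t = 0,…,T`) and `Sum.inr (h, s)` is the capital variable `a_{s+1}^h`
(`s = 0,…,T`, representing `a_1,…,a_{T+1}`). -/
abbrev Coord (H T : ℕ) := (Fin H × Fin (T + 1)) ⊕ (Fin H × Fin (T + 1))

/-- The (constant) gradient of the inequality constraint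
`g_{j+1}(z) = −Σ_h a_{j+1}^h`: entry `−1` at each `a_{j+1}^h`. -/
def gradG (H T : ℕ) (j : Fin (T + 1)) : Coord H T → ℝ
  | Sum.inl _ => 0
  | Sum.inr p => if p.2 = j then -1 else 0

/-- The feasible point `z̄` as a vector in `ℝ^{2H(T+1)}`. -/
def pointVec (H T : ℕ) (c a : Fin H → ℕ → ℝ) : Coord H T → ℝ
  | Sum.inl p => c p.1 (p.2 : ℕ)
  | Sum.inr p => a p.1 ((p.2 : ℕ) + 1)

/-- for every feasible point `z̄` there exists `z ∈ ℝ^{2H(T+1)}`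
with `∇g_j(z̄)ᵀ (z − z̄) < 0` for all `j` in the active set
`I(z̄) = {j : Σ_h ā_j^h = 0}`. -/
theorem exists_strictly_feasible_direction (H T : ℕ) (hH : 1 ≤ H)
    (r ω : ℕ → ℝ) (l β : Fin H → ℝ) (τ δ : ℝ) (a0 : Fin H → ℝ)
    (hr : ∀ t ≤ T, 0 < r t) (hω : ∀ t ≤ T, 1 ≤ ω t)
    (hl : ∀ h, 0 < l h) (hβ : ∀ h, 0 < β h ∧ β h < 1)
    (hτ : 1 ≤ τ) (hδ0 : 0 < δ) (hδ1 : δ < 1)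
    (ha0 : 0 < ∑ h, a0 h)
    (c a : Fin H → ℕ → ℝ) (hfeas : Feasible H T r ω l τ δ a0 c a) :
    ∃ z : Coord H T → ℝ, ∀ j : Fin (T + 1),
      (∑ h, a h ((j : ℕ) + 1)) = 0 →
      ∑ i : Coord H T, gradG H T j i * (z i - pointVec H T c a i) < 0 := by
  refine ⟨fun i => pointVec H T c a i + (match i with | Sum.inl _ => 0 | Sum.inr _ => 1), ?_⟩
  intro j _
  have : (∑ i : Coord H T, gradG H T j i *
      ((pointVec H T c a i + (match i with | Sum.inl _ => 0 | Sum.inr _ => 1)) - pointVec H T c a i))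
      = -(H : ℝ) := by
    rw [Fintype.sum_sum_type]
    simp [gradG, Fin.sum_univ_eq_sum_range, ← Finset.sum_product']
    rw [Fintype.sum_prod_type]
    simp [Finset.sum_ite_eq']
  rw [this]
  have : (0:ℝ) < H := by exact_mod_cast Nat.lt_of_lt_of_le Nat.zero_lt_one hH
  linarith
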